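/- arXiv:1401.5777 — 2 statements merged into one kernel-verified Lean document; each statement's English description precedes it below -/
import Mathlib

section
/- Let α > 0, θ_0 ∈ ℝ with θ_0 ≠ 0, and a, b ∈ ℝ with a² + b² > 0. Define the measure ν_0 on (0,∞) by ν_0(dx) = [1 + a cos(θ_0 log x) + b sin(θ_0 log x)] α x^{-(α+1)} dx (assuming a² + b² ≤ 1 so the density is nonnegative). Then the function t ↦ t^α ν_0((t,∞)) does not converge as t → ∞. In particular, ν_0 is not regularly varying with index α. -/
/-!
Write `W_{a,b}(x) = 1 + a cos(θ₀ log x) + b sin(θ₀ log x)`. Solving the linear system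
`α c - θ₀ d = α a`, `α d + θ₀ c = α b` for `(c, d)` makes `-x^{-α} W_{c,d}(x)` an antiderivative
of the density `W_{a,b}(x) α x^{-(α+1)}`, so `t^α ν₀((t,∞)) = W_{c,d}(t)` for `t > 0`. Along
`t = exp s` this is a `2π/θ₀`-periodic function of `s`, so it has a limit only if it is constant,
i.e. `c = d = 0`, which forces `a = b = 0`.
-/

open MeasureTheory Set Filter Topology

theorem Function.Periodic.eq_of_tendsto_atTop {X : Type*} [TopologicalSpace X] [T2Space X]
    {f : ℝ → X} {p : ℝ} (hf : Function.Periodic f p) (hp : p ≠ 0) {L : X}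
    (hL : Tendsto f atTop (𝓝 L)) (x : ℝ) : f x = L := by
  obtain ⟨q, hq, hfq⟩ : ∃ q > 0, Function.Periodic f q := by
    rcases hp.lt_or_gt with hp | hp
    exacts [⟨-p, neg_pos.mpr hp, hf.neg⟩, ⟨p, hp, hf⟩]
  have hseq : Tendsto (fun n : ℕ => x + n * q) atTop atTop :=
    tendsto_atTop_add_const_left _ _ (tendsto_natCast_atTop_atTop.atTop_mul_const hq)
  exact tendsto_nhds_unique tendsto_const_nhds ((hL.comp hseq).congr fun n => hfq.nat_mul n x)

theorem toReal_lintegral_Ioi_ofReal_of_hasDerivAt_of_nonneg {f f' : ℝ → ℝ} {t m : ℝ}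
    (hderiv : ∀ x ∈ Ici t, HasDerivAt f (f' x) x) (hf' : ∀ x ∈ Ioi t, 0 ≤ f' x)
    (hf : Tendsto f atTop (𝓝 m)) :
    (∫⁻ x in Ioi t, ENNReal.ofReal (f' x)).toReal = m - f t := by
  rw [← integral_Ioi_of_hasDerivAt_of_nonneg' hderiv hf' hf, integral_eq_lintegral_of_nonneg_ae
    ((ae_restrict_iff' measurableSet_Ioi).mpr (ae_of_all _ hf'))
    (integrableOn_Ioi_deriv_of_nonneg' hderiv hf' hf).aestronglyMeasurable]

noncomputable def logWave (θ a b x : ℝ) : ℝ :=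
  1 + a * Real.cos (θ * Real.log x) + b * Real.sin (θ * Real.log x)

section logWave

variable {α θ a b c d : ℝ}

theorem logWave_nonneg (hab : a ^ 2 + b ^ 2 ≤ 1) (x : ℝ) : 0 ≤ logWave θ a b x := by
  have := Real.sin_sq_add_cos_sq (θ * Real.log x)
  unfold logWave
  nlinarith [sq_nonneg (a * Real.sin (θ * Real.log x) - b * Real.cos (θ * Real.log x)),
    sq_nonneg (1 + a * Real.cos (θ * Real.log x) + b * Real.sin (θ * Real.log x))]

theorem abs_logWave_le (x : ℝ) : |logWave θ a b x| ≤ 1 + |a| + |b| := by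
  have hcos := Real.abs_cos_le_one (θ * Real.log x)
  have hsin := Real.abs_sin_le_one (θ * Real.log x)
  refine (abs_add_three _ _ _).trans ?_
  rw [abs_one, abs_mul, abs_mul]
  gcongr
  exacts [mul_le_of_le_one_right (abs_nonneg a) hcos, mul_le_of_le_one_right (abs_nonneg b) hsin]

theorem tendsto_rpow_neg_mul_logWave (hα : 0 < α) :
    Tendsto (fun x => x ^ (-α) * logWave θ a b x) atTop (𝓝 0) := by
  refine squeeze_zero_norm' ?_
    (by simpa using (tendsto_rpow_neg_atTop hα).mul_const (1 + |a| + |b|))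
  filter_upwards [eventually_ge_atTop 0] with x hx
  rw [norm_mul, Real.norm_of_nonneg (Real.rpow_nonneg hx _)]
  exact mul_le_mul_of_nonneg_left (abs_logWave_le x) (Real.rpow_nonneg hx _)

theorem hasDerivAt_logWave {x : ℝ} (hx : 0 < x) :
    HasDerivAt (logWave θ a b)
      (θ * (b * Real.cos (θ * Real.log x) - a * Real.sin (θ * Real.log x)) * x⁻¹) x := by
  have hlog : HasDerivAt (fun y => θ * Real.log y) (θ * x⁻¹) x :=
    (Real.hasDerivAt_log hx.ne').const_mul θ
  exact (((hlog.cos.const_mul a).const_add 1).add (hlog.sin.const_mul b)).congr_deriv (by ring)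

theorem hasDerivAt_neg_rpow_neg_mul_logWave
    (hca : α * c - θ * d = α * a) (hdb : α * d + θ * c = α * b) {x : ℝ} (hx : 0 < x) :
    HasDerivAt (fun y => -(y ^ (-α) * logWave θ c d y))
      (logWave θ a b x * (α * x ^ (-(α + 1)))) x := by
  have hpow : HasDerivAt (· ^ (-α)) (-α * x ^ (-α - 1)) x := by
    simpa using Real.hasDerivAt_rpow_const (p := -α) (Or.inl hx.ne')
  refine ((hpow.mul (hasDerivAt_logWave hx)).neg).congr_deriv ?_
  rw [show -(α + 1) = -α - 1 by ring, Real.rpow_sub_one hx.ne']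
  unfold logWave
  linear_combination (x ^ (-α) / x * Real.cos (θ * Real.log x)) * hca +
    (x ^ (-α) / x * Real.sin (θ * Real.log x)) * hdb

theorem toReal_withDensity_logWave_Ioi (hα : 0 < α) (hab : a ^ 2 + b ^ 2 ≤ 1)
    (hca : α * c - θ * d = α * a) (hdb : α * d + θ * c = α * b) {t : ℝ} (ht : 0 < t) :
    ((volume.restrict (Ioi 0)).withDensity
        (fun x => ENNReal.ofReal (logWave θ a b x * (α * x ^ (-(α + 1))))) (Ioi t)).toReal =
      t ^ (-α) * logWave θ c d t := by
  rw [withDensity_apply _ measurableSet_Ioi, Measure.restrict_restrict measurableSet_Ioi,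
    inter_eq_left.mpr (Ioi_subset_Ioi ht.le),
    toReal_lintegral_Ioi_ofReal_of_hasDerivAt_of_nonneg
      (fun x hx => hasDerivAt_neg_rpow_neg_mul_logWave hca hdb (ht.trans_le hx))
      (fun x hx => mul_nonneg (logWave_nonneg hab x) (by have := ht.trans hx; positivity))
      (by simpa using (tendsto_rpow_neg_mul_logWave hα).neg)]
  ring

theorem eq_zero_of_tendsto_logWave {L : ℝ} (hθ : θ ≠ 0)
    (h : Tendsto (logWave θ a b) atTop (𝓝 L)) : a = 0 ∧ b = 0 := by
  have hphase ψ : logWave θ a b (Real.exp (ψ / θ)) = 1 + a * Real.cos ψ + b * Real.sin ψ := by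
    simp only [logWave, Real.log_exp, mul_div_cancel₀ _ hθ]
  have hper : Function.Periodic (fun s => logWave θ a b (Real.exp s)) (2 * Real.pi / θ) := by
    intro s
    dsimp only
    rw [← mul_div_cancel_left₀ s hθ, ← add_div, hphase, hphase, Real.cos_add_two_pi,
      Real.sin_add_two_pi]
  have hconst ψ : 1 + a * Real.cos ψ + b * Real.sin ψ = L := by
    rw [← hphase]
    exact hper.eq_of_tendsto_atTop (by positivity) (h.comp Real.tendsto_exp_atTop) _
  have h0 := hconst 0
  have hπ := hconst Real.pi
  have hπ2 := hconst (Real.pi / 2)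
  have hπ2' := hconst (-(Real.pi / 2))
  simp only [Real.cos_zero, Real.sin_zero, Real.cos_pi, Real.sin_pi, Real.cos_pi_div_two,
    Real.sin_pi_div_two, Real.cos_neg, Real.sin_neg] at h0 hπ hπ2 hπ2'
  constructor <;> linarith

end logWave

/-- The measure `ν₀(dx) = [1 + a cos(θ₀ log x) + b sin(θ₀ log x)] α x^{-(α+1)} dx`
with `θ₀ ≠ 0` and `0 < a² + b² ≤ 1` has oscillating normalized tails:
`t ↦ t^α ν₀((t,∞))` does not converge as `t → ∞`; in particular `ν₀` is not
regularly varying with index `α`. -/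
theorem stmt_9 (α θ₀ a b : ℝ) (hα : 0 < α) (hθ₀ : θ₀ ≠ 0)
    (hab0 : 0 < a ^ 2 + b ^ 2) (hab1 : a ^ 2 + b ^ 2 ≤ 1)
    (ν₀ : Measure ℝ)
    (hν₀ : ν₀ = (volume.restrict (Ioi (0:ℝ))).withDensity
      (fun x => ENNReal.ofReal
        ((1 + a * Real.cos (θ₀ * Real.log x) + b * Real.sin (θ₀ * Real.log x)) *
          (α * x ^ (-(α + 1)))))) :
    ¬ ∃ L : ℝ, Tendsto (fun t : ℝ => t ^ α * (ν₀ (Ioi t)).toReal) atTop (nhds L) := by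
  obtain ⟨c, d, hca, hdb⟩ : ∃ c d : ℝ, α * c - θ₀ * d = α * a ∧ α * d + θ₀ * c = α * b := by
    have : α ^ 2 + θ₀ ^ 2 ≠ 0 := by positivity
    exact ⟨α * (α * a + θ₀ * b) / (α ^ 2 + θ₀ ^ 2), α * (α * b - θ₀ * a) / (α ^ 2 + θ₀ ^ 2),
      by field_simp; ring, by field_simp; ring⟩
  replace hν₀ : ν₀ = (volume.restrict (Ioi 0)).withDensity
      (fun x => ENNReal.ofReal (logWave θ₀ a b x * (α * x ^ (-(α + 1))))) := hν₀
  have htail : ∀ t > 0, t ^ α * (ν₀ (Ioi t)).toReal = logWave θ₀ c d t := fun t ht => by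
    rw [hν₀, toReal_withDensity_logWave_Ioi hα hab1 hca hdb ht, ← mul_assoc,
      ← Real.rpow_add ht, add_neg_cancel, Real.rpow_zero, one_mul]
  rintro ⟨L, hL⟩
  obtain ⟨rfl, rfl⟩ := eq_zero_of_tendsto_logWave hθ₀
    (hL.congr' (eventually_gt_atTop 0 |>.mono htail))
  have ha : a = 0 := by simpa [hα.ne'] using hca.symm
  have hb : b = 0 := by simpa [hα.ne'] using hdb.symm
  simp [ha, hb] at hab0
end

section
/- Let ν and ρ be σ-finite measures on ℝ^d with sup-norm ‖·‖, and suppose δ, θ > 0 satisfy ρ({x : |x_j| ≥ θ}) ≥ δ for every j = 1,…,d. Then for every s > 0, ν({z : ‖z‖ > s}) ≤ (d/δ) · (ν ⊛ ρ)({w : ‖w‖ > θ s / d}). -/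
/-!
For the sup-norm, `‖z‖ > s` forces `|z_j| > s` for some coordinate `j`, so `ν {‖z‖ > s}` is at most
the sum of the `d` coordinate tails. On the set `{|x_j| ≥ θ}`, of `ρ`-mass at least `δ`, the map
`z ↦ x ⊙ z` sends `{|z_j| > s}` into `{‖w‖ > θ s}`; integrating over `x` bounds `δ` times each
coordinate tail by the multiplicative convolution of the tail `{‖w‖ > θ s / d}`.
-/

open MeasureTheory Set
open scoped ENNReal

variable {ι : Type*}

theorem setOf_lt_pi_norm_subset_iUnion [Fintype ι] {E : ι → Type*} [∀ i, SeminormedAddCommGroup (E i)]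
    {s : ℝ} (hs : 0 ≤ s) : {z : ∀ i, E i | s < ‖z‖} ⊆ ⋃ i, {z | s < ‖z i‖} := by
  intro z hz
  by_contra hz'
  simp only [mem_iUnion, mem_ofPred_eq, not_exists, not_lt] at hz hz'
  exact hz.not_ge ((pi_norm_le_iff_of_nonneg hs).2 hz')

theorem measure_setOf_lt_pi_norm_le_sum [Fintype ι] {E : ι → Type*} [∀ i, SeminormedAddCommGroup (E i)]
    [MeasurableSpace (∀ i, E i)] (ν : Measure (∀ i, E i)) {s : ℝ} (hs : 0 ≤ s) :
    ν {z | s < ‖z‖} ≤ ∑ i, ν {z | s < ‖z i‖} :=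
  (measure_mono (setOf_lt_pi_norm_subset_iUnion hs)).trans (measure_iUnion_fintype_le _ _)

/-- The multiplicative convolution `(ν ⊛ ρ)(B) = ∫ ν (T_x⁻¹ B) dρ(x)`, `T_x = diag x`. -/
noncomputable def mulConv (ν ρ : Measure (ι → ℝ)) (B : Set (ι → ℝ)) : ℝ≥0∞ :=
  ∫⁻ x, ν ((fun z => fun k => x k * z k) ⁻¹' B) ∂ρ

theorem mulConv_mono (ν ρ : Measure (ι → ℝ)) : Monotone (mulConv ν ρ) :=
  fun _ _ hB => lintegral_mono fun _ => measure_mono (preimage_mono hB)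

theorem measure_mul_measure_le_mulConv [Fintype ι] (ν ρ : Measure (ι → ℝ)) (j : ι) {θ : ℝ} (hθ : 0 < θ)
    (s : ℝ) : ρ {x | θ ≤ |x j|} * ν {z | s < |z j|} ≤ mulConv ν ρ {w | θ * s < ‖w‖} := by
  set S : Set (ι → ℝ) := {x | θ ≤ |x j|}
  have hS : MeasurableSet S := measurableSet_le measurable_const (measurable_pi_apply j).abs
  have tail_subset : ∀ x ∈ S,
      {z | s < |z j|} ⊆ (fun z : ι → ℝ => fun k => x k * z k) ⁻¹' {w | θ * s < ‖w‖} := by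
    intro x hx z hz
    have hmul : θ * s < |x j * z j| := by
      rw [abs_mul]
      simp only [S, mem_ofPred_eq] at hx hz
      nlinarith [abs_nonneg (z j)]
    exact hmul.trans_le (by simpa using norm_le_pi_norm (fun k => x k * z k) j)
  calc ρ S * ν {z | s < |z j|} = ∫⁻ x, S.indicator (fun _ => ν {z | s < |z j|}) x ∂ρ := by
        rw [lintegral_indicator hS, setLIntegral_const, mul_comm]
    _ ≤ mulConv ν ρ {w | θ * s < ‖w‖} := by
        refine lintegral_mono fun x => ?_
        by_cases hx : x ∈ S
        · rw [indicator_of_mem hx]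
          exact measure_mono (tail_subset x hx)
        · rw [indicator_of_notMem hx]
          exact zero_le

theorem stmt_11_general (d : ℕ)
    (ν ρ : Measure (Fin d → ℝ))
    (δ θ : ℝ) (hδ : 0 < δ) (hθ : 0 < θ)
    (hρ : ∀ j : Fin d, ENNReal.ofReal δ ≤ ρ {x | θ ≤ |x j|}) :
    ∀ s > (0:ℝ),
      ν {z | s < ‖z‖} ≤
        ENNReal.ofReal ((d : ℝ) / δ) *
          ∫⁻ x, ν ((fun z => fun k => x k * z k) ⁻¹' {w | θ * s / d < ‖w‖}) ∂ρ := by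
  intro s hs
  set M := mulConv ν ρ {w | θ * s / d < ‖w‖}
  have coord_tail : ∀ j : Fin d, ν {z | s < |z j|} ≤ M / ENNReal.ofReal δ := by
    intro j
    have hd : (1 : ℝ) ≤ d := Nat.one_le_cast.2 j.pos
    have tail_mono : {w : Fin d → ℝ | θ * s < ‖w‖} ⊆ {w | θ * s / d < ‖w‖} :=
      fun w hw => (div_le_self (by positivity) hd).trans_lt hw
    rw [ENNReal.le_div_iff_mul_le (by simp [hδ]) (by simp), mul_comm]
    exact (mul_le_mul_left (hρ j) _).trans
      ((measure_mul_measure_le_mulConv ν ρ j hθ s).trans (mulConv_mono ν ρ tail_mono))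
  calc ν {z | s < ‖z‖} ≤ ∑ j, ν {z | s < |z j|} := by
        simpa using measure_setOf_lt_pi_norm_le_sum ν hs.le
    _ ≤ ∑ _j : Fin d, M / ENNReal.ofReal δ := Finset.sum_le_sum fun j _ => coord_tail j
    _ = ENNReal.ofReal ((d : ℝ) / δ) * M := by
        rw [Finset.sum_const, Finset.card_univ, Fintype.card_fin, nsmul_eq_mul,
          ENNReal.ofReal_div_of_pos hδ, ENNReal.ofReal_natCast, ENNReal.div_eq_inv_mul,
          ENNReal.div_eq_inv_mul, mul_left_comm, mul_assoc]

/-- If `ρ({|x_j| ≥ θ}) ≥ δ` for every coordinate `j`, then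
`ν({‖z‖ > s}) ≤ (d/δ) (ν ⊛ ρ)({‖w‖ > θs/d})` (sup-norm on `ℝ^d`). -/
theorem stmt_11 (d : ℕ) (hd : 1 ≤ d)
    (ν ρ : Measure (Fin d → ℝ)) [SigmaFinite ν] [SigmaFinite ρ]
    (δ θ : ℝ) (hδ : 0 < δ) (hθ : 0 < θ)
    (hρ : ∀ j : Fin d, ENNReal.ofReal δ ≤ ρ {x | θ ≤ |x j|}) :
    ∀ s > (0:ℝ),
      ν {z | s < ‖z‖} ≤
        ENNReal.ofReal ((d : ℝ) / δ) *
          ∫⁻ x, ν ((fun z => fun k => x k * z k) ⁻¹' {w | θ * s / d < ‖w‖}) ∂ρ :=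
  stmt_11_general d ν ρ δ θ hδ hθ hρ
end
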